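/- The function Ω is continuous and strictly monotonically increasing on the open interval (1/2, 1): for all real δ₁, δ₂ with 1/2 < δ₁ < δ₂ < 1 one has Ω(δ₁) < Ω(δ₂), and Ω restricted to (1/2, 1) is continuous. -/

import Mathlib

/-!
With `t = 2δ - 1 > 0` and `L = -(log r)/2 > 0` the inner factor of the integrand is
`r^(-1/2) (e^(tL) - 1)/t + e^(tL)`. Both terms increase strictly with `t`, the first because
secant slopes of the convex function `exp` increase, and the weight `(1 + √(1-r))⁻¹ (1-r)^(-1/2)`
is positive; so `Ω` is strictly increasing on `(1/2, 1)`.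
For `δ` in `(1/2, b)` with `b < 1` the integrand is positive and, by the same monotonicity,
bounded by its value at `b`, which is `O(r^(-b) (1-r)^(-1/2))` and hence integrable (a Beta
integral); dominated convergence gives continuity.
-/

open MeasureTheory

/-- The function Ω from the paper: for δ < 1, δ ≠ 1/2,
`Ω(δ) = (1/π) ∫₀¹ (1/(1+√(1−r))) (1−r)^(−1/2) ((1/(1−2δ))(r^(−1/2) − r^(−δ)) + r^(1/2−δ)) dr`. -/
noncomputable def Omega (δ : ℝ) : ℝ :=
  (1 / Real.pi) *
    ∫ r in Set.Ioo (0:ℝ) 1,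
      (1 / (1 + Real.sqrt (1 - r))) * (1 - r) ^ (-(1:ℝ)/2) *
        ((1 / (1 - 2*δ)) * (r ^ (-(1:ℝ)/2) - r ^ (-δ)) + r ^ ((1:ℝ)/2 - δ))

open Set Real

theorem integrableOn_rpow_mul_one_sub_rpow {p q : ℝ} (hp : -1 < p) (hq : -1 < q) :
    IntegrableOn (fun x : ℝ => x ^ p * (1 - x) ^ q) (Ioo 0 1) := by
  have h := (Complex.betaIntegral_convergent (u := p + 1) (v := q + 1)
    (by simp; linarith) (by simp; linarith)).norm
  rw [intervalIntegrable_iff_integrableOn_Ioo_of_le zero_le_one] at h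
  refine h.congr_fun (fun x hx => ?_) measurableSet_Ioo
  have h1x : 0 < 1 - x := sub_pos.mpr hx.2
  simp only [add_sub_cancel_right]
  rw [norm_mul, ← Complex.ofReal_one, ← Complex.ofReal_sub,
    Complex.norm_cpow_eq_rpow_re_of_pos hx.1, Complex.norm_cpow_eq_rpow_re_of_pos h1x]
  simp

theorem setIntegral_lt_setIntegral_of_forall_lt {X : Type*} [MeasurableSpace X] {μ : Measure X}
    {s : Set X} {f g : X → ℝ} (hs : MeasurableSet s) (hμs : μ s ≠ 0)
    (hf : IntegrableOn f s μ) (hg : IntegrableOn g s μ) (hlt : ∀ x ∈ s, f x < g x) :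
    ∫ x in s, f x ∂μ < ∫ x in s, g x ∂μ := by
  have hsupp : s ⊆ Function.support fun x => g x - f x :=
    fun x hx => (sub_pos.mpr (hlt x hx)).ne'
  have hnonneg : 0 ≤ᵐ[μ.restrict s] fun x => g x - f x :=
    (ae_restrict_iff' hs).mpr (ae_of_all _ fun x hx => (sub_pos.mpr (hlt x hx)).le)
  rw [← sub_pos, ← integral_sub hg hf,
    setIntegral_pos_iff_support_of_nonneg_ae hnonneg (hg.sub hf),
    inter_eq_self_of_subset_right hsupp]
  exact pos_iff_ne_zero.mpr hμs

theorem exp_sub_one_div_lt_exp_sub_one_div {a b : ℝ} (ha : 0 < a) (hab : a < b) :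
    (exp a - 1) / a < (exp b - 1) / b := by
  simpa using strictConvexOn_exp.secant_strict_mono (mem_univ 0) (mem_univ a) (mem_univ b)
    ha.ne' (ha.trans hab).ne' hab

noncomputable def omegaWeight (r : ℝ) : ℝ := 1 / (1 + √(1 - r)) * (1 - r) ^ (-(1:ℝ)/2)

noncomputable def omegaKernel (δ r : ℝ) : ℝ :=
  1 / (1 - 2*δ) * (r ^ (-(1:ℝ)/2) - r ^ (-δ)) + r ^ ((1:ℝ)/2 - δ)

theorem Omega_eq_integral (δ : ℝ) :
    Omega δ = 1 / π * ∫ r in Ioo 0 1, omegaWeight r * omegaKernel δ r := rfl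

theorem omegaWeight_pos {r : ℝ} (hr : r < 1) : 0 < omegaWeight r := by
  have : 0 < 1 - r := sub_pos.mpr hr
  unfold omegaWeight; positivity

theorem omegaWeight_le {r : ℝ} (hr : r < 1) : omegaWeight r ≤ (1 - r) ^ (-(1:ℝ)/2) := by
  have h1 : 1 / (1 + √(1 - r)) ≤ 1 := div_le_one_of_le₀ (by simp [sqrt_nonneg]) (by positivity)
  exact mul_le_of_le_one_left (rpow_nonneg (sub_pos.mpr hr).le _) h1

theorem continuousOn_omegaWeight : ContinuousOn omegaWeight (Iio 1) := by
  unfold omegaWeight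
  refine ContinuousOn.mul (Continuous.continuousOn ?_) ?_
  · exact continuous_const.div (by fun_prop) fun r => by positivity
  · exact ContinuousOn.rpow_const (by fun_prop) fun r hr => Or.inl (sub_ne_zero.mpr hr.ne')

theorem omegaKernel_eq_exp {δ r : ℝ} (hr : 0 < r) (hδ : δ ≠ 1/2) :
    omegaKernel δ r = r ^ (-(1:ℝ)/2) * ((exp ((2*δ - 1) * (-log r / 2)) - 1) / (2*δ - 1))
      + exp ((2*δ - 1) * (-log r / 2)) := by
  have hE : r ^ ((1:ℝ)/2 - δ) = exp ((2*δ - 1) * (-log r / 2)) := by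
    rw [rpow_def_of_pos hr]; ring_nf
  have hsplit : r ^ (-δ) = r ^ (-(1:ℝ)/2) * r ^ ((1:ℝ)/2 - δ) := by
    rw [← rpow_add hr]; ring_nf
  have ht : 1 - 2*δ ≠ 0 := by contrapose! hδ; linarith
  have ht' : 2*δ - 1 ≠ 0 := by contrapose! hδ; linarith
  rw [omegaKernel, hsplit, hE]
  field_simp
  ring

theorem omegaKernel_pos {δ r : ℝ} (hδ : 1/2 < δ) (hr0 : 0 < r) (hr1 : r ≤ 1) :
    0 < omegaKernel δ r := by
  have hL : 0 ≤ -log r / 2 := by linarith [log_nonpos hr0.le hr1]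
  have ht : 0 < 2*δ - 1 := by linarith
  rw [omegaKernel_eq_exp hr0 hδ.ne']
  have : 0 ≤ exp ((2*δ - 1) * (-log r / 2)) - 1 :=
    sub_nonneg.mpr (one_le_exp (mul_nonneg ht.le hL))
  positivity

theorem omegaKernel_strictMonoOn {r : ℝ} (hr0 : 0 < r) (hr1 : r < 1) :
    StrictMonoOn (fun δ => omegaKernel δ r) (Ioi (1/2)) := by
  intro δ₁ (h₁ : 1/2 < δ₁) δ₂ (h₂ : 1/2 < δ₂) h₁₂
  simp only [omegaKernel_eq_exp hr0 h₁.ne', omegaKernel_eq_exp hr0 h₂.ne']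
  have hL : 0 < -log r / 2 := by linarith [log_neg hr0 hr1]
  set L := -log r / 2
  have ht₁ : 0 < 2*δ₁ - 1 := by linarith
  have ht₂ : 0 < 2*δ₂ - 1 := by linarith
  have hlt : (2*δ₁ - 1) * L < (2*δ₂ - 1) * L := by gcongr
  have hslope : ∀ t, 0 < t → (exp (t * L) - 1) / t = L * ((exp (t * L) - 1) / (t * L)) := by
    intro t ht; field_simp
  have hdiff : (exp ((2*δ₁ - 1) * L) - 1) / (2*δ₁ - 1)
      < (exp ((2*δ₂ - 1) * L) - 1) / (2*δ₂ - 1) := by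
    rw [hslope _ ht₁, hslope _ ht₂]
    exact mul_lt_mul_of_pos_left (exp_sub_one_div_lt_exp_sub_one_div (mul_pos ht₁ hL) hlt) hL
  gcongr

theorem omegaKernel_le {δ r : ℝ} (hδ : 1/2 < δ) (hr0 : 0 < r) (hr1 : r ≤ 1) :
    omegaKernel δ r ≤ (1 / (2*δ - 1) + 1) * r ^ (-δ) := by
  have ht : 0 < 2*δ - 1 := by linarith
  have h1 : 0 ≤ r ^ (-(1:ℝ)/2) := rpow_nonneg hr0.le _
  have h2 : r ^ ((1:ℝ)/2 - δ) ≤ r ^ (-δ) := rpow_le_rpow_of_exponent_ge hr0 hr1 (by linarith)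
  have h3 : 1 / (1 - 2*δ) * (r ^ (-(1:ℝ)/2) - r ^ (-δ)) ≤ 1 / (2*δ - 1) * r ^ (-δ) := by
    rw [show 1 - 2*δ = -(2*δ - 1) by ring, div_neg, neg_mul, ← mul_neg, neg_sub]
    gcongr
    linarith
  rw [omegaKernel]
  linarith

theorem continuousOn_omegaKernel (δ : ℝ) : ContinuousOn (omegaKernel δ) (Ioi 0) := by
  have hrpow : ∀ p : ℝ, ContinuousOn (fun r : ℝ => r ^ p) (Ioi 0) := fun p =>
    continuousOn_id.rpow_const fun r hr => Or.inl (ne_of_gt hr)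
  exact (continuousOn_const.mul ((hrpow _).sub (hrpow _))).add (hrpow _)

theorem continuousAt_omegaKernel_left {δ r : ℝ} (hδ : δ ≠ 1/2) (hr : 0 < r) :
    ContinuousAt (fun δ => omegaKernel δ r) δ := by
  have hden : 1 - 2*δ ≠ 0 := by contrapose! hδ; linarith
  have hrpow : ∀ {f : ℝ → ℝ}, ContinuousAt f δ → ContinuousAt (fun δ => r ^ f δ) δ :=
    fun hf => (continuousAt_const_rpow hr.ne').comp hf
  unfold omegaKernel
  fun_prop (disch := assumption)

theorem continuousOn_omegaIntegrand (δ : ℝ) :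
    ContinuousOn (fun r => omegaWeight r * omegaKernel δ r) (Ioo 0 1) :=
  (continuousOn_omegaWeight.mono fun _ hr => hr.2).mul
    ((continuousOn_omegaKernel δ).mono fun _ hr => hr.1)

theorem integrableOn_omegaIntegrand {δ : ℝ} (h₁ : 1/2 < δ) (h₂ : δ < 1) :
    IntegrableOn (fun r => omegaWeight r * omegaKernel δ r) (Ioo 0 1) := by
  refine Integrable.mono' (((integrableOn_rpow_mul_one_sub_rpow (p := -δ) (q := -(1:ℝ)/2)
    (by linarith) (by norm_num)).const_mul (1 / (2*δ - 1) + 1)))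
    ((continuousOn_omegaIntegrand δ).aestronglyMeasurable measurableSet_Ioo)
    (ae_restrict_of_forall_mem measurableSet_Ioo fun r ⟨hr0, hr1⟩ => ?_)
  rw [norm_of_nonneg (mul_pos (omegaWeight_pos hr1) (omegaKernel_pos h₁ hr0 hr1.le)).le]
  calc omegaWeight r * omegaKernel δ r
      ≤ (1 - r) ^ (-(1:ℝ)/2) * ((1 / (2*δ - 1) + 1) * r ^ (-δ)) :=
        mul_le_mul (omegaWeight_le hr1) (omegaKernel_le h₁ hr0 hr1.le)
          (omegaKernel_pos h₁ hr0 hr1.le).le (rpow_nonneg (sub_pos.mpr hr1).le _)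
    _ = (1 / (2*δ - 1) + 1) * (r ^ (-δ) * (1 - r) ^ (-(1:ℝ)/2)) := by ring

theorem strictMonoOn_Omega : StrictMonoOn Omega (Ioo (1/2) 1) := by
  intro δ₁ ⟨h₁, h₁'⟩ δ₂ ⟨h₂, h₂'⟩ h₁₂
  rw [Omega_eq_integral, Omega_eq_integral]
  refine mul_lt_mul_of_pos_left (setIntegral_lt_setIntegral_of_forall_lt measurableSet_Ioo
    (by simp) (integrableOn_omegaIntegrand h₁ h₁') (integrableOn_omegaIntegrand h₂ h₂')
    fun r ⟨hr0, hr1⟩ => ?_) (by positivity)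
  exact mul_lt_mul_of_pos_left (omegaKernel_strictMonoOn hr0 hr1 h₁ h₂ h₁₂) (omegaWeight_pos hr1)

theorem continuousOn_Omega : ContinuousOn Omega (Ioo (1/2) 1) := by
  intro δ₀ ⟨hδ₀, hδ₀'⟩
  refine ContinuousAt.continuousWithinAt ?_
  rw [show Omega = _ from funext Omega_eq_integral]
  refine continuousAt_const.mul ?_
  have hb : δ₀ < (δ₀ + 1) / 2 := by linarith
  refine continuousAt_of_dominated
    (bound := fun r => omegaWeight r * omegaKernel ((δ₀ + 1) / 2) r)
    (Filter.Eventually.of_forall fun δ =>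
      (continuousOn_omegaIntegrand δ).aestronglyMeasurable measurableSet_Ioo) ?_
    (integrableOn_omegaIntegrand (hδ₀.trans hb) (by linarith))
    (ae_restrict_of_forall_mem measurableSet_Ioo fun r ⟨hr0, _⟩ =>
      continuousAt_const.mul (continuousAt_omegaKernel_left hδ₀.ne' hr0))
  filter_upwards [Ioo_mem_nhds hδ₀ hb] with δ ⟨h₁, h₂⟩
  refine ae_restrict_of_forall_mem measurableSet_Ioo fun r ⟨hr0, hr1⟩ => ?_
  rw [norm_of_nonneg (mul_pos (omegaWeight_pos hr1) (omegaKernel_pos h₁ hr0 hr1.le)).le]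
  exact mul_le_mul_of_nonneg_left ((omegaKernel_strictMonoOn hr0 hr1).monotoneOn h₁
    (h₁.trans h₂) h₂.le) (omegaWeight_pos hr1).le

theorem Omega_strictMono_continuous :
    (∀ δ₁ δ₂ : ℝ, 1/2 < δ₁ → δ₁ < δ₂ → δ₂ < 1 → Omega δ₁ < Omega δ₂) ∧
      ContinuousOn Omega (Set.Ioo (1/2 : ℝ) 1) :=
  ⟨fun _ _ h₁ h₁₂ h₂ => strictMonoOn_Omega ⟨h₁, h₁₂.trans h₂⟩ ⟨h₁.trans h₁₂, h₂⟩ h₁₂,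
    continuousOn_Omega⟩
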